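/- arXiv:2504.11133 — 3 statements merged into one kernel-verified Lean document; each statement's English description precedes it below -/
import Mathlib

section
/- Let T > 0, R > 0 with R² ≥ T, and define λ(s) = (T-s)⁻¹ - R²(T-s)⁻² for s ∈ [0,T). Then for all 0 ≤ l ≤ u < T: ∫_l^u exp(2∫_l^s λ(t) dt) ds = ((T-l)²/(2R²)) · (1 - exp(2R²/(T-l) - 2R²/(T-u))). -/
open intervalIntegral Real Set

/-!
The inner integrand `(T - t)⁻¹ - c (T - t)⁻²` has the antiderivative
`-log (T - t) - c (T - t)⁻¹`, so `exp (2 ∫_l^s λ) = (T - l)² (T - s)⁻² exp (2c/(T - l) - 2c/(T - s))`.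
This is in turn the derivative of `-(T - l)²/(2c) · exp (2c/(T - l) - 2c/(T - s))`, which
evaluates to the claimed formula.
-/

lemma sub_ne_zero_of_mem_of_not_mem {G : Type*} [AddGroup G] {S : Set G} {T t : G} (ht : t ∈ S)
    (hT : T ∉ S) : T - t ≠ 0 :=
  sub_ne_zero.mpr (ne_of_mem_of_not_mem ht hT).symm

section

variable {T c l s u : ℝ}

lemma continuousOn_inv_sub_sub_mul_inv_sq (hT : T ∉ uIcc l s) :
    ContinuousOn (fun t => (T - t)⁻¹ - c * ((T - t) ^ 2)⁻¹) (uIcc l s) := by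
  refine continuousOn_of_forall_continuousAt fun t ht => ?_
  have := sub_ne_zero_of_mem_of_not_mem ht hT
  fun_prop (disch := simp [this])

lemma hasDerivAt_neg_log_sub_sub_mul_inv (c : ℝ) {t : ℝ} (ht : T - t ≠ 0) :
    HasDerivAt (fun t => -log (T - t) - c * (T - t)⁻¹) ((T - t)⁻¹ - c * ((T - t) ^ 2)⁻¹) t := by
  have hsub : HasDerivAt (fun t : ℝ => T - t) (-1) t := by
    simpa using (hasDerivAt_id t).const_sub T
  refine (((hasDerivAt_log ht).comp t hsub).neg.sub ((hsub.inv ht).const_mul c)).congr_deriv ?_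
  ring

lemma integral_inv_sub_sub_mul_inv_sq (hT : T ∉ uIcc l s) :
    ∫ t in l..s, ((T - t)⁻¹ - c * ((T - t) ^ 2)⁻¹) =
      log (T - l) - log (T - s) + c / (T - l) - c / (T - s) := by
  rw [integral_eq_sub_of_hasDerivAt
    (fun t ht => hasDerivAt_neg_log_sub_sub_mul_inv c <| sub_ne_zero_of_mem_of_not_mem ht hT)
    (continuousOn_inv_sub_sub_mul_inv_sq hT).intervalIntegrable]
  ring

lemma exp_two_mul_integral_inv_sub_sub_mul_inv_sq (hT : T ∉ uIcc l s) :
    exp (2 * ∫ t in l..s, ((T - t)⁻¹ - c * ((T - t) ^ 2)⁻¹)) =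
      (T - l) ^ 2 / (T - s) ^ 2 * exp (2 * c / (T - l) - 2 * c / (T - s)) := by
  have hl : T - l ≠ 0 := sub_ne_zero_of_mem_of_not_mem left_mem_uIcc hT
  have hs : T - s ≠ 0 := sub_ne_zero_of_mem_of_not_mem right_mem_uIcc hT
  rw [integral_inv_sub_sub_mul_inv_sq hT,
    show 2 * (log (T - l) - log (T - s) + c / (T - l) - c / (T - s)) =
      log ((T - l) ^ 2) - log ((T - s) ^ 2) + (2 * c / (T - l) - 2 * c / (T - s)) by
      rw [log_pow, log_pow]; push_cast; ring,
    exp_add, exp_sub, exp_log (by positivity), exp_log (by positivity)]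

lemma hasDerivAt_mul_exp_sub_div_sub (hc : c ≠ 0) (hs : T - s ≠ 0) :
    HasDerivAt (fun s => -(T - l) ^ 2 / (2 * c) * exp (2 * c / (T - l) - 2 * c / (T - s)))
      ((T - l) ^ 2 / (T - s) ^ 2 * exp (2 * c / (T - l) - 2 * c / (T - s))) s := by
  have hsub : HasDerivAt (fun s : ℝ => T - s) (-1) s := by
    simpa using (hasDerivAt_id s).const_sub T
  refine ((((hasDerivAt_const s (2 * c)).div hsub hs).const_sub
    (2 * c / (T - l))).exp.const_mul (-(T - l) ^ 2 / (2 * c))).congr_deriv ?_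
  simp only [Pi.div_apply]
  field_simp
  ring

theorem integral_exp_two_mul_integral_inv_sub_sub_mul_inv_sq (hc : c ≠ 0) (hT : T ∉ uIcc l u) :
    ∫ s in l..u, exp (2 * ∫ t in l..s, ((T - t)⁻¹ - c * ((T - t) ^ 2)⁻¹)) =
      (T - l) ^ 2 / (2 * c) * (1 - exp (2 * c / (T - l) - 2 * c / (T - u))) := by
  have hne : ∀ s ∈ uIcc l u, T - s ≠ 0 := fun s hs => sub_ne_zero_of_mem_of_not_mem hs hT
  rw [integral_congr fun s hs =>
      exp_two_mul_integral_inv_sub_sub_mul_inv_sq fun h => hT (uIcc_subset_uIcc_left hs h),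
    integral_eq_sub_of_hasDerivAt (fun s hs => hasDerivAt_mul_exp_sub_div_sub hc (hne s hs))]
  · rw [sub_self, exp_zero]
    ring
  · refine ContinuousOn.intervalIntegrable fun s hs => ?_
    have := hne s hs
    exact ContinuousAt.continuousWithinAt (by fun_prop (disch := simp [this]))

end

theorem stmt5_general (T R : ℝ) (hR : 0 < R)
    (l u : ℝ) (hlu : l ≤ u) (huT : u < T) :
    ∫ s in l..u,
        Real.exp (2 * ∫ t in l..s, ((T - t)⁻¹ - R ^ 2 * ((T - t) ^ 2)⁻¹)) =
      (T - l) ^ 2 / (2 * R ^ 2) *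
        (1 - Real.exp (2 * R ^ 2 / (T - l) - 2 * R ^ 2 / (T - u))) := by
  refine integral_exp_two_mul_integral_inv_sub_sub_mul_inv_sq (pow_ne_zero 2 hR.ne') ?_
  rw [uIcc_of_le hlu]
  exact fun hT => huT.not_ge hT.2

/-- explicit computation of `I(l,u)` in the compactly supported case. -/
theorem stmt5 (T R : ℝ) (hT : 0 < T) (hR : 0 < R) (hRT : T ≤ R ^ 2)
    (l u : ℝ) (hl : 0 ≤ l) (hlu : l ≤ u) (huT : u < T) :
    ∫ s in l..u,
        Real.exp (2 * ∫ t in l..s, ((T - t)⁻¹ - R ^ 2 * ((T - t) ^ 2)⁻¹)) =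
      (T - l) ^ 2 / (2 * R ^ 2) *
        (1 - Real.exp (2 * R ^ 2 / (T - l) - 2 * R ^ 2 / (T - u))) :=
  stmt5_general T R hR l u hlu huT
end

section
/- Let T > 0, 0 < α < T⁻¹, and set λ₀ = (α - T⁻¹)/(αT) < 0 and λ(s) = 1/(λ₀⁻¹ - s) for s ∈ [0,T]. Then for 0 ≤ l ≤ u ≤ T: ∫_l^u exp(2∫_l^s λ(t) dt) ds = (l - λ₀⁻¹)² · (1/(l - λ₀⁻¹) - 1/(u - λ₀⁻¹)) = ((l - λ₀⁻¹)/(u - λ₀⁻¹))·(u - l). Moreover T · (∫₀^T exp(2∫₀^s λ(t)dt) ds)⁻¹ = (αT)⁻¹. -/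
/-!
With `c = λ₀⁻¹ < 0` we have `λ(t) = (c - t)⁻¹`, so `2 ∫_l^s λ = 2 log ((c - l) / (c - s))` and the
outer integrand is `(c - l)² / (c - s)²`, with primitive `(c - l)² (c - s)⁻¹`. The value at
`(l, u) = (0, T)` is `c T / (c - T)`, and `c (α T - 1) = α T²` turns `T · I(0, T)⁻¹` into `(α T)⁻¹`.
-/

open intervalIntegral

section

open Set Interval

theorem zero_notMem_uIcc_const_sub {c l s : ℝ} (hc : c ∉ [[l, s]]) :
    (0 : ℝ) ∉ [[c - s, c - l]] := by
  intro h
  apply hc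
  rcases mem_uIcc.mp h with ⟨h₁, h₂⟩ | ⟨h₁, h₂⟩
  exacts [mem_uIcc_of_le (by linarith) (by linarith), mem_uIcc_of_ge (by linarith) (by linarith)]

theorem sub_div_sub_pos_of_notMem_uIcc {c l s : ℝ} (hc : c ∉ [[l, s]]) :
    0 < (c - l) / (c - s) := by
  simp only [mem_uIcc, not_or, not_and_or, not_le] at hc
  rcases hc with ⟨h₁ | h₁, h₂ | h₂⟩
  · exact div_pos_of_neg_of_neg (by linarith) (by linarith)
  · linarith
  · linarith
  · exact div_pos (by linarith) (by linarith)

theorem integral_inv_const_sub {c l s : ℝ} (hc : c ∉ [[l, s]]) :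
    ∫ t in l..s, (c - t)⁻¹ = Real.log ((c - l) / (c - s)) := by
  rw [integral_comp_sub_left (fun x => x⁻¹) c, integral_inv (zero_notMem_uIcc_const_sub hc)]

theorem integral_inv_const_sub_sq {c l u : ℝ} (hc : c ∉ [[l, u]]) :
    ∫ s in l..u, ((c - s) ^ 2)⁻¹ = (c - u)⁻¹ - (c - l)⁻¹ := by
  have h := integral_zpow (n := -2) (Or.inr ⟨by norm_num, zero_notMem_uIcc_const_sub hc⟩)
  simp only [zpow_neg, zpow_ofNat] at h
  rw [integral_comp_sub_left (fun x => (x ^ 2)⁻¹) c, h]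
  norm_num
  ring

theorem exp_two_mul_integral_inv_const_sub {c l s : ℝ} (hc : c ∉ [[l, s]]) :
    Real.exp (2 * ∫ t in l..s, (c - t)⁻¹) = ((c - l) / (c - s)) ^ 2 := by
  rw [integral_inv_const_sub hc, mul_comm, Real.exp_mul,
    Real.exp_log (sub_div_sub_pos_of_notMem_uIcc hc), Real.rpow_two]

theorem integral_exp_two_mul_integral_inv_const_sub {c l u : ℝ} (hc : c ∉ [[l, u]]) :
    ∫ s in l..u, Real.exp (2 * ∫ t in l..s, (c - t)⁻¹) =
      (l - c) ^ 2 * ((l - c)⁻¹ - (u - c)⁻¹) := by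
  have hcongr : EqOn (fun s => Real.exp (2 * ∫ t in l..s, (c - t)⁻¹))
      (fun s => (c - l) ^ 2 * ((c - s) ^ 2)⁻¹) [[l, u]] := fun s hs => by
    dsimp only
    rw [exp_two_mul_integral_inv_const_sub fun h => hc (uIcc_subset_uIcc_left hs h), div_pow,
      div_eq_mul_inv]
  rw [integral_congr hcongr, intervalIntegral.integral_const_mul, integral_inv_const_sub_sq hc,
    ← neg_sub l c, ← neg_sub u c]
  simp only [even_two, Even.neg_pow, inv_neg]
  ring

end

/-- explicit computation of `I(l,u)` in the log-concave case, and the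
resulting value `T · I(0,T)⁻¹ = (αT)⁻¹`. -/
theorem stmt7 (T α : ℝ) (hT : 0 < T) (hα : 0 < α) (hαT : α < T⁻¹) :
    (∀ l u : ℝ, 0 ≤ l → l ≤ u → u ≤ T →
      (∫ s in l..u,
          Real.exp (2 * ∫ t in l..s, (((α - T⁻¹) / (α * T))⁻¹ - t)⁻¹)) =
        (l - ((α - T⁻¹) / (α * T))⁻¹) ^ 2 *
          ((l - ((α - T⁻¹) / (α * T))⁻¹)⁻¹ - (u - ((α - T⁻¹) / (α * T))⁻¹)⁻¹) ∧
      (∫ s in l..u,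
          Real.exp (2 * ∫ t in l..s, (((α - T⁻¹) / (α * T))⁻¹ - t)⁻¹)) =
        (l - ((α - T⁻¹) / (α * T))⁻¹) / (u - ((α - T⁻¹) / (α * T))⁻¹) * (u - l)) ∧
    T * (∫ s in (0:ℝ)..T,
        Real.exp (2 * ∫ t in (0:ℝ)..s, (((α - T⁻¹) / (α * T))⁻¹ - t)⁻¹))⁻¹ =
      (α * T)⁻¹ := by
  have hα_sub : α - T⁻¹ < 0 := by linarith
  have hαT_lt : α * T < 1 := by rwa [← lt_div_iff₀ hT, one_div]
  set c := ((α - T⁻¹) / (α * T))⁻¹ with hc_def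
  have hc : c < 0 := inv_lt_zero.mpr (div_neg_of_neg_of_pos hα_sub (by positivity))
  have hc_mul : c * (α * T - 1) = α * T ^ 2 := by
    rw [hc_def, inv_div]
    field_simp [(by linarith : α * T - 1 ≠ 0)]
  clear_value c
  refine ⟨fun l u hl hlu _ => ?_, ?_⟩
  · have hI := integral_exp_two_mul_integral_inv_const_sub
      (Set.notMem_uIcc_of_lt (by linarith) (by linarith) : c ∉ Set.uIcc l u)
    have hlc : l - c ≠ 0 := by linarith
    have huc : u - c ≠ 0 := by linarith
    refine ⟨hI, hI.trans ?_⟩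
    field_simp
    ring
  · have hc0 : c ≠ 0 := hc.ne
    have hTc : T - c ≠ 0 := by linarith
    have hcT : c - T ≠ 0 := by linarith
    have hI₀ : (0 - c) ^ 2 * ((0 - c)⁻¹ - (T - c)⁻¹) = c * T / (c - T) := by
      field_simp
      ring
    rw [integral_exp_two_mul_integral_inv_const_sub (Set.notMem_uIcc_of_lt hc (hc.trans hT)), hI₀,
      inv_div]
    field_simp
    linear_combination hc_mul
end

section
/- Let μ ≪ ν be probability measures and for n ∈ ℕ define μⁿ with dμⁿ/dν = C_n⁻¹·min(dμ/dν, n) where C_n = ∫ min(dμ/dν, n) dν. Then C_n ↑ 1, H(μⁿ|ν) ≤ log n - log C_n < ∞, and H(μⁿ|μ) ≤ 1 - log C_n < ∞, where H denotes relative entropy. -/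
/-!
If `p ≤ M • q` then `dp/dq ≤ M`, hence `log (dp/dq) ≤ log M` `p`-a.e. and `H(p|q) ≤ log M`;
integrability of the log-density is automatic, because `x log x ≥ x - 1`. The truncated measure
`μⁿ` has density `Cₙ⁻¹ min(dμ/dν, n) ≤ n / Cₙ` with respect to `ν`, and `min(dμ/dν, n) ≤ dμ/dν`
gives `μⁿ ≤ Cₙ⁻¹ • μ`, so in fact `H(μⁿ|μ) ≤ -log Cₙ`. Finally `Cₙ ↑ ∫ dμ/dν dν = 1` by
dominated convergence.
-/

open MeasureTheory Filter
open scoped ENNReal Topology Classical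

/-- Relative entropy (Kullback–Leibler divergence) `H(p|q)`, valued in `ℝ≥0∞`:
`∫ log(dp/dq) dp` when `p ≪ q` and the log-density is `p`-integrable, `∞` otherwise. -/
noncomputable def relEntropy {X : Type*} [MeasurableSpace X] (p q : Measure X) : ℝ≥0∞ :=
  if p ≪ q ∧ Integrable (fun x => Real.log (p.rnDeriv q x).toReal) p then
    ENNReal.ofReal (∫ x, Real.log (p.rnDeriv q x).toReal ∂p)
  else ∞

section

variable {X : Type*} [MeasurableSpace X] {μ ν : Measure X}

lemma MeasureTheory.Measure.rnDeriv_le_of_le_smul [SigmaFinite ν] {c : ℝ≥0∞} (h : μ ≤ c • ν) :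
    μ.rnDeriv ν ≤ᵐ[ν] fun _ => c := by
  refine ae_le_of_forall_setLIntegral_le_of_sigmaFinite (μ.measurable_rnDeriv ν) fun s _ _ => ?_
  simpa [setLIntegral_const, mul_comm] using (Measure.setLIntegral_rnDeriv_le s).trans (h s)

lemma integrable_llr_of_ae_llr_le [IsFiniteMeasure μ] [IsFiniteMeasure ν] (hμν : μ ≪ ν) {B : ℝ}
    (h : ∀ᵐ x ∂μ, llr μ ν x ≤ B) : Integrable (llr μ ν) μ := by
  rw [← integrable_rnDeriv_mul_log_iff hμν]
  have hr : Integrable (fun x => (μ.rnDeriv ν x).toReal) ν := Measure.integrable_toReal_rnDeriv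
  refine integrable_of_le_of_le (g₁ := fun x => (μ.rnDeriv ν x).toReal - 1)
    (g₂ := fun x => B * (μ.rnDeriv ν x).toReal) (by fun_prop)
    (ae_of_all _ fun x => Real.self_sub_one_le_mul_log ENNReal.toReal_nonneg) ?_
    (hr.sub (integrable_const 1)) (hr.const_mul B)
  filter_upwards [Measure.ae_rnDeriv_ne_zero_imp_of_ae ν h] with x hx
  by_cases hr0 : (μ.rnDeriv ν x).toReal = 0
  · simp [hr0]
  · rw [mul_comm B]
    exact mul_le_mul_of_nonneg_left (hx fun h0 => hr0 (by simp [h0])) ENNReal.toReal_nonneg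

lemma relEntropy_le_of_le_smul [IsProbabilityMeasure μ] [IsFiniteMeasure ν] {M : ℝ} (hM : 0 ≤ M)
    (h : μ ≤ ENNReal.ofReal M • ν) : relEntropy μ ν ≤ ENNReal.ofReal (Real.log M) := by
  have hμν : μ ≪ ν := Measure.absolutelyContinuous_of_le_smul h
  have hllr : ∀ᵐ x ∂μ, llr μ ν x ≤ Real.log M := by
    filter_upwards [hμν.ae_le (Measure.rnDeriv_le_of_le_smul h), Measure.rnDeriv_pos hμν,
      hμν.ae_le (Measure.rnDeriv_lt_top μ ν)] with x hle hpos hlt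
    exact Real.log_le_log (ENNReal.toReal_pos hpos.ne' hlt.ne)
      (ENNReal.toReal_le_of_le_ofReal hM hle)
  rw [relEntropy, if_pos ⟨hμν, integrable_llr_of_ae_llr_le hμν hllr⟩]
  refine ENNReal.ofReal_le_ofReal ?_
  calc ∫ x, llr μ ν x ∂μ ≤ ∫ _, Real.log M ∂μ :=
        integral_mono_ae (integrable_llr_of_ae_llr_le hμν hllr) (integrable_const _) hllr
    _ = Real.log M := by simp

section MinConst

variable {f : X → ℝ}

lemma MeasureTheory.Integrable.min_const (hf : Integrable f ν) (hf0 : 0 ≤ f) {c : ℝ} (hc : 0 ≤ c) :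
    Integrable (fun x => min (f x) c) ν :=
  hf.mono' (hf.aestronglyMeasurable.inf aestronglyMeasurable_const) <| ae_of_all _ fun x => by
    rw [Real.norm_of_nonneg (le_min (hf0 x) hc)]
    exact min_le_left _ _

lemma monotone_integral_min_natCast (hf : Integrable f ν) (hf0 : 0 ≤ f) :
    Monotone fun n : ℕ => ∫ x, min (f x) n ∂ν := fun m n hmn =>
  integral_mono (hf.min_const hf0 m.cast_nonneg) (hf.min_const hf0 n.cast_nonneg)
    fun _ => min_le_min le_rfl (Nat.cast_le.mpr hmn)

lemma tendsto_integral_min_natCast (hf : Integrable f ν) (hf0 : 0 ≤ f) :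
    Tendsto (fun n : ℕ => ∫ x, min (f x) n ∂ν) atTop (𝓝 (∫ x, f x ∂ν)) := by
  refine tendsto_integral_of_dominated_convergence f
    (fun n => (hf.min_const hf0 n.cast_nonneg).aestronglyMeasurable) hf
    (fun n => ae_of_all _ fun x => ?_) (ae_of_all _ fun x => ?_)
  · rw [Real.norm_of_nonneg (le_min (hf0 x) n.cast_nonneg)]
    exact min_le_left _ _
  · refine tendsto_const_nhds.congr' ?_
    filter_upwards [eventually_ge_atTop ⌈f x⌉₊] with n hn
    exact (min_eq_left ((Nat.le_ceil _).trans (by exact_mod_cast hn))).symm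

lemma integral_min_const_pos (hf : Integrable f ν) (hf0 : 0 ≤ f) (hpos : 0 < ∫ x, f x ∂ν)
    {c : ℝ} (hc : 0 < c) : 0 < ∫ x, min (f x) c ∂ν := by
  have hmin0 : (0 : X → ℝ) ≤ fun x => min (f x) c := fun x => le_min (hf0 x) hc.le
  have hsupp : Function.support (fun x => min (f x) c) = Function.support f := by
    ext x
    refine ⟨fun h hfx => h (by simp [hfx, hc.le]), fun h => ?_⟩
    exact (lt_min ((hf0 x).lt_of_ne' h) hc).ne'
  rw [integral_pos_iff_support_of_nonneg hmin0 (hf.min_const hf0 hc.le), hsupp]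
  rwa [integral_pos_iff_support_of_nonneg hf0 hf] at hpos

lemma isProbabilityMeasure_withDensity_ofReal_inv_integral_mul (hf : Integrable f ν) (hf0 : 0 ≤ f)
    (hpos : 0 < ∫ x, f x ∂ν) :
    IsProbabilityMeasure (ν.withDensity fun x => ENNReal.ofReal ((∫ y, f y ∂ν)⁻¹ * f x)) := by
  constructor
  rw [withDensity_apply _ MeasurableSet.univ, setLIntegral_univ,
    ← ofReal_integral_eq_lintegral_ofReal (hf.const_mul _)
      (ae_of_all _ fun x => mul_nonneg (inv_nonneg.mpr hpos.le) (hf0 x)),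
    integral_const_mul, inv_mul_cancel₀ hpos.ne', ENNReal.ofReal_one]

end MinConst

noncomputable def truncMass (μ ν : Measure X) (c : ℝ) : ℝ :=
  ∫ x, min (μ.rnDeriv ν x).toReal c ∂ν

/-- The paper's `μⁿ` at a real level `c`, with `truncMass μ ν n = Cₙ`. -/
noncomputable def truncatedMeasure (μ ν : Measure X) (c : ℝ) : Measure X :=
  ν.withDensity fun x => ENNReal.ofReal ((truncMass μ ν c)⁻¹ * min (μ.rnDeriv ν x).toReal c)

section TruncatedMeasure

variable {c : ℝ}

lemma truncMass_nonneg (hc : 0 ≤ c) : 0 ≤ truncMass μ ν c :=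
  integral_nonneg fun _ => le_min ENNReal.toReal_nonneg hc

lemma truncMass_pos [IsFiniteMeasure μ] [NeZero μ] [SigmaFinite ν] (hμν : μ ≪ ν) (hc : 0 < c) :
    0 < truncMass μ ν c := by
  refine integral_min_const_pos Measure.integrable_toReal_rnDeriv (fun _ => ENNReal.toReal_nonneg)
    ?_ hc
  rw [Measure.integral_toReal_rnDeriv hμν]
  exact measureReal_univ_pos

lemma isProbabilityMeasure_truncatedMeasure [IsFiniteMeasure μ] [NeZero μ] [SigmaFinite ν]
    (hμν : μ ≪ ν) (hc : 0 < c) : IsProbabilityMeasure (truncatedMeasure μ ν c) :=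
  isProbabilityMeasure_withDensity_ofReal_inv_integral_mul
    (Measure.integrable_toReal_rnDeriv.min_const (fun _ => ENNReal.toReal_nonneg) hc.le)
    (fun _ => le_min ENNReal.toReal_nonneg hc.le) (truncMass_pos hμν hc)

lemma truncatedMeasure_le_smul_self (hc : 0 ≤ c) :
    truncatedMeasure μ ν c ≤ ENNReal.ofReal ((truncMass μ ν c)⁻¹ * c) • ν := by
  rw [← withDensity_const]
  refine withDensity_mono (ae_of_all _ fun x => ENNReal.ofReal_le_ofReal ?_)
  exact mul_le_mul_of_nonneg_left (min_le_right _ _) (inv_nonneg.mpr (truncMass_nonneg hc))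

lemma truncatedMeasure_le_smul [SigmaFinite μ] [SigmaFinite ν] (hμν : μ ≪ ν) (hc : 0 ≤ c) :
    truncatedMeasure μ ν c ≤ ENNReal.ofReal (truncMass μ ν c)⁻¹ • μ := by
  have hC : 0 ≤ (truncMass μ ν c)⁻¹ := inv_nonneg.mpr (truncMass_nonneg hc)
  calc truncatedMeasure μ ν c
      ≤ ν.withDensity (ENNReal.ofReal (truncMass μ ν c)⁻¹ • μ.rnDeriv ν) := by
        refine withDensity_mono (ae_of_all _ fun x => ?_)
        simp only [Pi.smul_apply, smul_eq_mul, ENNReal.ofReal_mul hC]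
        gcongr
        exact (ENNReal.ofReal_le_ofReal (min_le_left _ _)).trans ENNReal.ofReal_toReal_le
    _ = ENNReal.ofReal (truncMass μ ν c)⁻¹ • μ := by
        rw [withDensity_smul _ (Measure.measurable_rnDeriv μ ν),
          Measure.withDensity_rnDeriv_eq μ ν hμν]

lemma relEntropy_truncatedMeasure_le_log_sub [IsProbabilityMeasure μ] [IsFiniteMeasure ν]
    (hμν : μ ≪ ν) (hc : 0 < c) :
    relEntropy (truncatedMeasure μ ν c) ν ≤
      ENNReal.ofReal (Real.log c - Real.log (truncMass μ ν c)) := by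
  have := isProbabilityMeasure_truncatedMeasure hμν hc
  have hC := truncMass_pos hμν hc
  rw [sub_eq_neg_add, ← Real.log_inv, ← Real.log_mul (inv_ne_zero hC.ne') hc.ne']
  exact relEntropy_le_of_le_smul (mul_nonneg (inv_nonneg.mpr hC.le) hc.le)
    (truncatedMeasure_le_smul_self hc.le)

lemma relEntropy_truncatedMeasure_le_neg_log [IsProbabilityMeasure μ] [SigmaFinite ν]
    (hμν : μ ≪ ν) (hc : 0 < c) :
    relEntropy (truncatedMeasure μ ν c) μ ≤ ENNReal.ofReal (-Real.log (truncMass μ ν c)) := by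
  have := isProbabilityMeasure_truncatedMeasure hμν hc
  rw [← Real.log_inv]
  exact relEntropy_le_of_le_smul (inv_nonneg.mpr (truncMass_nonneg hc.le))
    (truncatedMeasure_le_smul hμν hc.le)

end TruncatedMeasure

end

/-- truncation approximation `μⁿ` of `μ ≪ ν` with
`dμⁿ/dν = Cₙ⁻¹ min(dμ/dν, n)`, `Cₙ = ∫ min(dμ/dν, n) dν`: `Cₙ ↑ 1`,
`H(μⁿ|ν) ≤ log n - log Cₙ` and `H(μⁿ|μ) ≤ 1 - log Cₙ`. -/
theorem stmt17 {X : Type*} [MeasurableSpace X] (μ ν : Measure X)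
    [IsProbabilityMeasure μ] [IsProbabilityMeasure ν] (hμν : μ ≪ ν) :
    Monotone (fun n : ℕ => ∫ x, min ((μ.rnDeriv ν x).toReal) (n : ℝ) ∂ν) ∧
    Tendsto (fun n : ℕ => ∫ x, min ((μ.rnDeriv ν x).toReal) (n : ℝ) ∂ν)
      atTop (𝓝 1) ∧
    ∀ n : ℕ, 1 ≤ n →
      relEntropy (ν.withDensity (fun x => ENNReal.ofReal
          ((∫ y, min ((μ.rnDeriv ν y).toReal) (n : ℝ) ∂ν)⁻¹ *
            min ((μ.rnDeriv ν x).toReal) (n : ℝ)))) ν ≤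
        ENNReal.ofReal (Real.log n -
          Real.log (∫ y, min ((μ.rnDeriv ν y).toReal) (n : ℝ) ∂ν)) ∧
      relEntropy (ν.withDensity (fun x => ENNReal.ofReal
          ((∫ y, min ((μ.rnDeriv ν y).toReal) (n : ℝ) ∂ν)⁻¹ *
            min ((μ.rnDeriv ν x).toReal) (n : ℝ)))) μ ≤
        ENNReal.ofReal (1 -
          Real.log (∫ y, min ((μ.rnDeriv ν y).toReal) (n : ℝ) ∂ν)) := by
  have hf : Integrable (fun x => (μ.rnDeriv ν x).toReal) ν := Measure.integrable_toReal_rnDeriv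
  have hf0 : 0 ≤ fun x => (μ.rnDeriv ν x).toReal := fun _ => ENNReal.toReal_nonneg
  have hf1 : ∫ x, (μ.rnDeriv ν x).toReal ∂ν = 1 := by
    simp [Measure.integral_toReal_rnDeriv hμν]
  refine ⟨monotone_integral_min_natCast hf hf0, hf1 ▸ tendsto_integral_min_natCast hf hf0,
    fun n hn => ?_⟩
  have hn : (0 : ℝ) < n := by exact_mod_cast hn
  refine ⟨relEntropy_truncatedMeasure_le_log_sub hμν hn,
    (relEntropy_truncatedMeasure_le_neg_log hμν hn).trans
      (ENNReal.ofReal_le_ofReal (by unfold truncMass; linarith))⟩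
end
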